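/- arXiv:1406.3455 — 5 statements merged into one kernel-verified Lean document; each statement's English description precedes it below -/
import Mathlib

section
/- Let M be a finite semigroup generated by elements a and c, let I be the minimum ideal of M, let u ∈ I be some product of a's and c's, and let v = (a^ω u c^ω)^ω where x^ω denotes the idempotent power of x. Then v is idempotent, v = a^ω v = v c^ω, and consequently a^{ω+1} v c^{ω+1} = a v c^{ω+1} = a^{ω+1} v c = a v c. -/
/-- `pw x n = x^(n+1)`: the (n+1)-st power of `x` in a semigroup. -/
def pw {S : Type*} [Mul S] (x : S) : ℕ → S
  | 0 => x
  | n + 1 => pw x n * x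

/-- `sprod f n = f 0 * f 1 * ⋯ * f n`: the product of the first `n+1` values of `f`. -/
def sprod {S : Type*} [Mul S] (f : ℕ → S) : ℕ → S
  | 0 => f 0
  | n + 1 => sprod f n * f (n + 1)

/-- A (two-sided) ideal of a semigroup. -/
def IsIdeal {S : Type*} [Mul S] (I : Set S) : Prop :=
  I.Nonempty ∧ ∀ s : S, ∀ x ∈ I, s * x ∈ I ∧ x * s ∈ I

lemma pw_comm {S : Type*} [Semigroup S] (x : S) (n : ℕ) : x * pw x n = pw x n * x := by
  induction n with
  | zero => rfl
  | succ n ih => show x * (pw x n * x) = pw x n * x * x; rw [← mul_assoc, ih]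

lemma pw_left_absorb {S : Type*} [Semigroup S] {x z : S} (h : z * x = x) (n : ℕ) :
    z * pw x n = pw x n := by
  induction n with
  | zero => exact h
  | succ n ih => show z * (pw x n * x) = pw x n * x; rw [← mul_assoc, ih]

lemma pw_right_absorb {S : Type*} [Semigroup S] {x z : S} (h : x * z = x) (n : ℕ) :
    pw x n * z = pw x n := by
  induction n with
  | zero => exact h
  | succ n ih => show pw x n * x * z = pw x n * x; rw [mul_assoc, h]

/-- Let `M` be a finite semigroup generated by `a, c`, let `I` be the minimum ideal of
`M`, let `u ∈ I` be a product of `a`'s and `c`'s, and let `v = (a^ω u c^ω)^ω` where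
`x^ω` denotes the idempotent power of `x` (formalised as `omg x`, an idempotent positive
power of `x`).  Then `v` is idempotent, `v = a^ω v = v c^ω`, and consequently
`a^{ω+1} v c^{ω+1} = a v c^{ω+1} = a^{ω+1} v c = a v c`. -/
theorem stmt5 {M : Type*} [Semigroup M] [Finite M] (a c : M)
    (hgen : Subsemigroup.closure {a, c} = ⊤)
    (I : Set M) (hI : IsIdeal I) (hmin : ∀ J : Set M, IsIdeal J → I ⊆ J)
    (u : M) (hu : u ∈ I)
    (huword : ∃ (f : ℕ → M) (n : ℕ), (∀ m, f m = a ∨ f m = c) ∧ sprod f n = u)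
    (omg : M → M) (homg : ∀ x : M, (∃ n : ℕ, omg x = pw x n) ∧ omg x * omg x = omg x) :
    let v := omg (omg a * u * omg c)
    v * v = v ∧ v = omg a * v ∧ v = v * omg c ∧
    (omg a * a) * v * (omg c * c) = a * v * (omg c * c) ∧
    a * v * (omg c * c) = (omg a * a) * v * c ∧
    (omg a * a) * v * c = a * v * c := by
  intro v
  obtain ⟨⟨n, hn⟩, hvv⟩ := homg (omg a * u * omg c)
  have ha : omg a * omg a = omg a := (homg a).2
  have hc : omg c * omg c = omg c := (homg c).2
  have hav : omg a * v = v := by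
    show omg a * omg (omg a * u * omg c) = omg (omg a * u * omg c)
    rw [hn]
    exact pw_left_absorb (by rw [← mul_assoc, ← mul_assoc, ha]) n
  have hvc : v * omg c = v := by
    show omg (omg a * u * omg c) * omg c = omg (omg a * u * omg c)
    rw [hn]
    exact pw_right_absorb (by rw [mul_assoc (omg a * u), hc]) n
  have haa : omg a * a = a * omg a := by
    obtain ⟨m, hm⟩ := (homg a).1
    rw [hm]; exact (pw_comm a m).symm
  have hcc : omg c * c = c * omg c := by
    obtain ⟨m, hm⟩ := (homg c).1
    rw [hm]; exact (pw_comm c m).symm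
  have key1 : omg a * a * v = a * v := by
    rw [haa, mul_assoc, hav]
  have key2 : v * (omg c * c) = v * c := by
    rw [← mul_assoc, hvc]
  refine ⟨hvv, hav.symm, hvc.symm, ?_, ?_, ?_⟩
  · rw [key1]
  · rw [mul_assoc, mul_assoc, key2, ← mul_assoc, ← mul_assoc, key1]
  · rw [key1]
end

section
/- A completely simple semigroup M[G,Q] is isomorphic to the direct product of the group G with a rectangular band if and only if the product of any two idempotents of M[G,Q] is idempotent. -/
/-!
In `G × (I × Λ)` an element is idempotent exactly when its group component is `1`, so products
of idempotents are idempotent, and this property is transported along any multiplicative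
bijection. Conversely, the idempotents of `M[G,Q]` are the `(i, (Q λ i)⁻¹, λ)`; requiring the
product of `(i₀, (Q λ i₀)⁻¹, λ)` and `(j, (Q λ₀ j)⁻¹, λ₀)` to be idempotent forces the sandwich
matrix to factor as `Q λ j = a λ * b j`. Then `(i, g, λ) ↦ (b i * g * a λ, (i, λ))` is an
isomorphism onto `G × (I × Λ)`.
-/

section IdempotentsClosed

variable {α β : Type*}

def IdempotentsClosedUnderMul (m : α → α → α) : Prop :=
  ∀ e f, m e e = e → m f f = f → m (m e f) (m e f) = m e f

theorem IdempotentsClosedUnderMul.of_injective_hom {mα : α → α → α} {mβ : β → β → β}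
    {φ : α → β} (hφ : Function.Injective φ) (hmul : ∀ x y, φ (mα x y) = mβ (φ x) (φ y))
    (h : IdempotentsClosedUnderMul mβ) : IdempotentsClosedUnderMul mα := by
  intro e f he hf
  have hφe : mβ (φ e) (φ e) = φ e := by rw [← hmul, he]
  have hφf : mβ (φ f) (φ f) = φ f := by rw [← hmul, hf]
  apply hφ
  rw [hmul, hmul]
  exact h _ _ hφe hφf

end IdempotentsClosed

section ReesMatrix

variable {G : Type*} [Group G] {I Λ : Type*}

def reesMul (Q : Λ → I → G) (x y : I × G × Λ) : I × G × Λ :=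
  (x.1, x.2.1 * Q x.2.2 y.1 * y.2.1, y.2.2)

def rectGroupMul (x y : G × I × Λ) : G × I × Λ :=
  (x.1 * y.1, (x.2.1, y.2.2))

theorem idempotentsClosedUnderMul_rectGroupMul :
    IdempotentsClosedUnderMul (rectGroupMul : G × I × Λ → _ → _) := by
  intro e f he hf
  have he1 : e.1 = 1 := mul_eq_left.mp (congrArg Prod.fst he)
  have hf1 : f.1 = 1 := mul_eq_left.mp (congrArg Prod.fst hf)
  simp [rectGroupMul, he1, hf1]

theorem reesMul_self_eq_self_iff (Q : Λ → I → G) (x : I × G × Λ) :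
    reesMul Q x x = x ↔ x.2.1 = (Q x.2.2 x.1)⁻¹ := by
  obtain ⟨i, g, l⟩ := x
  simp only [reesMul, Prod.mk.injEq, true_and, and_true, mul_assoc, mul_eq_left,
    mul_eq_one_iff_eq_inv']

theorem exists_factorization_of_idempotentsClosedUnderMul [Nonempty I] [Nonempty Λ]
    {Q : Λ → I → G} (h : IdempotentsClosedUnderMul (reesMul Q)) :
    ∃ (a : Λ → G) (b : I → G), ∀ l j, Q l j = a l * b j := by
  obtain ⟨i₀⟩ := ‹Nonempty I›
  obtain ⟨l₀⟩ := ‹Nonempty Λ›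
  refine ⟨fun l => Q l i₀ * (Q l₀ i₀)⁻¹, fun j => Q l₀ j, fun l j => ?_⟩
  have hprod := (reesMul_self_eq_self_iff Q _).mp <|
    h (i₀, (Q l i₀)⁻¹, l) (j, (Q l₀ j)⁻¹, l₀)
      ((reesMul_self_eq_self_iff Q _).mpr rfl) ((reesMul_self_eq_self_iff Q _).mpr rfl)
  simp only [reesMul] at hprod
  rw [← hprod]
  group

def reesEquiv (a : Λ → G) (b : I → G) : I × G × Λ ≃ G × I × Λ where
  toFun x := (b x.1 * x.2.1 * a x.2.2, (x.1, x.2.2))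
  invFun y := (y.2.1, (b y.2.1)⁻¹ * y.1 * (a y.2.2)⁻¹, y.2.2)
  left_inv := by rintro ⟨i, g, l⟩; simp [mul_assoc]
  right_inv := by rintro ⟨g, i, l⟩; simp [mul_assoc]

theorem reesEquiv_reesMul {Q : Λ → I → G} {a : Λ → G} {b : I → G}
    (hQ : ∀ l j, Q l j = a l * b j) (x y : I × G × Λ) :
    reesEquiv a b (reesMul Q x y) = rectGroupMul (reesEquiv a b x) (reesEquiv a b y) := by
  simp only [reesEquiv, reesMul, rectGroupMul, Equiv.coe_fn_mk, hQ, mul_assoc]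

end ReesMatrix

/-- A completely simple semigroup `M[G,Q]` (on `I × G × Λ` with multiplication
`(i,g,λ)(j,h,ρ) = (i, g·Q_{λ,j}·h, ρ)`) is isomorphic to the direct product of the group
`G` with the rectangular band on `I × Λ` if and only if the product of any two
idempotents of `M[G,Q]` is idempotent. -/
theorem stmt12 {G : Type*} [Group G] {I Λ : Type*} [Nonempty I] [Nonempty Λ]
    (Q : Λ → I → G) :
    let m : I × G × Λ → I × G × Λ → I × G × Λ :=
      fun x y => (x.1, x.2.1 * Q x.2.2 y.1 * y.2.1, y.2.2)
    ((∃ φ : (I × G × Λ) ≃ G × (I × Λ),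
        ∀ x y : I × G × Λ,
          φ (m x y) = ((φ x).1 * (φ y).1, ((φ x).2.1, (φ y).2.2))) ↔
      (∀ e f : I × G × Λ, m e e = e → m f f = f → m (m e f) (m e f) = m e f)) := by
  show (∃ φ : (I × G × Λ) ≃ G × (I × Λ), ∀ x y,
      φ (reesMul Q x y) = rectGroupMul (φ x) (φ y)) ↔ IdempotentsClosedUnderMul (reesMul Q)
  constructor
  · rintro ⟨φ, hφ⟩
    exact .of_injective_hom φ.injective hφ idempotentsClosedUnderMul_rectGroupMul
  · intro h
    obtain ⟨a, b, hQ⟩ := exists_factorization_of_idempotentsClosedUnderMul h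
    exact ⟨reesEquiv a b, reesEquiv_reesMul hQ⟩
end

section
/- Let M⁰[G,P] be a Rees matrix semigroup with zero over a group G where the sandwich matrix P has some entry equal to 0 (and no row or column all-zero). Then the variety generated by M⁰[G,P] contains a proper 3-nilpotent semigroup. In particular, there is a subsemigroup S of (M⁰[G,P])² and an ideal J of S such that the Rees quotient S/J is 3-nilpotent but not 2-nilpotent. -/
/-- Let `M⁰[G,P]` be a Rees matrix semigroup with zero over a group `G` (universe
`Option (I × G × Λ)` with `none` the zero), where the sandwich matrix `P` (entries in
`G ∪ {0}`, rendered as `Option G`) has some zero entry but no all-zero row or column.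
Then the variety generated by `M⁰[G,P]` contains a proper 3-nilpotent semigroup: there
is a subsemigroup `S` of the square and an ideal `J` of `S` such that the Rees quotient
`S/J` is 3-nilpotent but not 2-nilpotent. -/
theorem stmt13 {G : Type*} [Group G] {I Λ : Type*} [Nonempty I] [Nonempty Λ]
    (P : Λ → I → Option G)
    (hzero : ∃ (l : Λ) (i : I), P l i = none)
    (hrow : ∀ l : Λ, ∃ i : I, P l i ≠ none)
    (hcol : ∀ i : I, ∃ l : Λ, P l i ≠ none) :
    let R := Option (I × G × Λ)
    let m : R → R → R := fun x y =>
      match x, y with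
      | some (i, g, l), some (j, h, r) =>
        match P l j with
        | some q => some (i, g * q * h, r)
        | none => none
      | _, _ => none
    let m2 : R × R → R × R → R × R := fun x y => (m x.1 y.1, m x.2 y.2)
    ∃ S J : Set (R × R),
      (∀ a ∈ S, ∀ b ∈ S, m2 a b ∈ S) ∧
      J ⊆ S ∧ J.Nonempty ∧
      (∀ a ∈ S, ∀ x ∈ J, m2 a x ∈ J ∧ m2 x a ∈ J) ∧
      (∀ a ∈ S, ∀ b ∈ S, ∀ c ∈ S, m2 (m2 a b) c ∈ J) ∧
      (∃ a ∈ S, ∃ b ∈ S, m2 a b ∉ J) := by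
  intro R m m2
  obtain ⟨l0, i0, hz⟩ := hzero
  obtain ⟨i1, hi1⟩ := hrow l0
  obtain ⟨p, hp⟩ := Option.ne_none_iff_exists'.mp hi1
  obtain ⟨l1, hl1⟩ := hcol i0
  obtain ⟨q, hq⟩ := Option.ne_none_iff_exists'.mp hl1
  -- zero absorbs
  have mnl : ∀ y : R, m none y = none := by intro y; cases y <;> rfl
  have mnr : ∀ x : R, m x none = none := by intro x; cases x <;> rfl
  -- key killing lemma: row l0 against column i0 dies
  have mz : ∀ (j : I) (g h : G) (l : Λ), m (some (j, g, l0)) (some (i0, h, l)) = none := by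
    intro j g h l; simp only [m, hz]
  set a : R × R := (some (i0, 1, l0), some (i0, 1, l1)) with ha
  set b : R × R := (some (i1, 1, l0), some (i0, 1, l0)) with hb
  set c : R × R := (some (i0, 1 * p * 1, l0), some (i0, 1 * q * 1, l0)) with hcd
  have hc : m2 a b = c := by
    simp only [m2, m, ha, hb, hcd, hp, hq]
  set J : Set (R × R) := {x | x.1 = none ∨ x.2 = none} with hJ
  have hJmul : ∀ x y : R × R, (x ∈ J ∨ y ∈ J) → m2 x y ∈ J := by
    rintro x y ((h | h) | (h | h)) <;>
      refine show (m2 x y).1 = none ∨ (m2 x y).2 = none from ?_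
    · exact Or.inl (by show m x.1 y.1 = none; rw [h])
    · exact Or.inr (by show m x.2 y.2 = none; rw [h])
    · exact Or.inl (by show m x.1 y.1 = none; rw [h]; exact mnr x.1)
    · exact Or.inr (by show m x.2 y.2 = none; rw [h]; exact mnr x.2)
  have haa : m2 a a ∈ J := show _ ∨ _ from
    Or.inl (by show m a.1 a.1 = none; rw [ha]; exact mz _ _ _ _)
  have hac : m2 a c ∈ J := show _ ∨ _ from
    Or.inl (by show m a.1 c.1 = none; rw [ha, hcd]; exact mz _ _ _ _)
  have hba : m2 b a ∈ J := show _ ∨ _ from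
    Or.inl (by show m b.1 a.1 = none; rw [ha, hb]; exact mz _ _ _ _)
  have hbb : m2 b b ∈ J := show _ ∨ _ from
    Or.inr (by show m b.2 b.2 = none; rw [hb]; exact mz _ _ _ _)
  have hbc : m2 b c ∈ J := show _ ∨ _ from
    Or.inl (by show m b.1 c.1 = none; rw [hb, hcd]; exact mz _ _ _ _)
  have hca : m2 c a ∈ J := show _ ∨ _ from
    Or.inl (by show m c.1 a.1 = none; rw [ha, hcd]; exact mz _ _ _ _)
  have hcb : m2 c b ∈ J := show _ ∨ _ from
    Or.inr (by show m c.2 b.2 = none; rw [hb, hcd]; exact mz _ _ _ _)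
  have hcc : m2 c c ∈ J := show _ ∨ _ from
    Or.inl (by show m c.1 c.1 = none; rw [hcd]; exact mz _ _ _ _)
  have hcS : c ∈ ({a, b, c} : Set (R × R)) := by right; right; rfl
  refine ⟨J ∪ {a, b, c}, J, ?_, Set.subset_union_left,
    ⟨(none, none), Or.inl rfl⟩, ?_, ?_, ?_⟩
  · -- closure
    rintro x (hx | hx) y (hy | hy)
    · exact Or.inl (hJmul x y (Or.inl hx))
    · exact Or.inl (hJmul x y (Or.inl hx))
    · exact Or.inl (hJmul x y (Or.inr hy))
    · rcases hx with rfl | rfl | rfl <;> rcases hy with rfl | rfl | rfl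
      · exact Or.inl haa
      · exact Or.inr (hc ▸ hcS)
      · exact Or.inl hac
      · exact Or.inl hba
      · exact Or.inl hbb
      · exact Or.inl hbc
      · exact Or.inl hca
      · exact Or.inl hcb
      · exact Or.inl hcc
  · -- ideal
    intro s _ x hx
    exact ⟨hJmul s x (Or.inr hx), hJmul x s (Or.inl hx)⟩
  · -- 3-nilpotent
    rintro x hx y hy z hz'
    have hxy : m2 x y ∈ J ∨ m2 x y = c := by
      rcases hx with hx | hx
      · exact Or.inl (hJmul x y (Or.inl hx))
      · rcases hy with hy | hy
        · exact Or.inl (hJmul x y (Or.inr hy))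
        · rcases hx with rfl | rfl | rfl <;> rcases hy with rfl | rfl | rfl
          · exact Or.inl haa
          · exact Or.inr hc
          · exact Or.inl hac
          · exact Or.inl hba
          · exact Or.inl hbb
          · exact Or.inl hbc
          · exact Or.inl hca
          · exact Or.inl hcb
          · exact Or.inl hcc
    rcases hxy with h | h
    · exact hJmul _ z (Or.inl h)
    · rw [h]
      rcases hz' with hz' | hz'
      · exact hJmul c z (Or.inr hz')
      · rcases hz' with rfl | rfl | rfl
        · exact hca
        · exact hcb
        · exact hcc
  · -- proper
    refine ⟨a, Or.inr (Or.inl rfl), b, Or.inr (Or.inr (Or.inl rfl)), ?_⟩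
    rw [hc]
    rintro (h | h) <;> simp [hcd] at h
end

section
/- Let M be the 5-element semigroup on {a,b,e,f,0} whose only nonzero products are ea = a, bf = b, ee = e, ff = f (all other products equal 0). In M², the subsemigroup S generated by (a,f) and (e,b) has the property that the only elements of S with both coordinates nonzero are (a,f), (e,b), and (a,b); the set I of elements of S having a zero coordinate is an ideal of S; and the Rees quotient S/I is 3-nilpotent but not 2-nilpotent. -/
/-- The 5-element semigroup `M` on `{a,b,e,f,0}` whose only nonzero products are
`ea = a`, `bf = b`, `ee = e`, `ff = f`. -/
inductive M5 : Type
  | a | b | e | f | z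
  deriving DecidableEq

instance : Fintype M5 :=
  ⟨{M5.a, M5.b, M5.e, M5.f, M5.z}, by intro x; cases x <;> decide⟩

def M5.mul : M5 → M5 → M5
  | .e, .a => .a
  | .b, .f => .b
  | .e, .e => .e
  | .f, .f => .f
  | _, _ => .z

instance : Semigroup M5 where
  mul := M5.mul
  mul_assoc := by decide

/-!
Multiplying coordinatewise, a word in the generators `(a,f)`, `(e,b)` keeps a nonzero first
coordinate only if it is `(e,b)ᵏ` or `(e,b)ᵏ(a,f)`, and a nonzero second coordinate only if it is
`(a,f)ᵏ` or `(e,b)(a,f)ᵏ`. No word of length three is of both kinds, and the elements with a zero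
coordinate form an ideal, so every product of three elements of `S` lies in `I`. The elements of
`S` outside `I` are therefore generators or products of two generators, and among the latter only
`(e,b)(a,f) = (a,b)` survives.
-/

-- Not a global instance: `*` on `M5` would then elaborate through it rather than `Semigroup M5`.
abbrev M5.semigroupWithZero : SemigroupWithZero M5 where
  __ := (inferInstance : Semigroup M5)
  zero := .z
  zero_mul := by decide
  mul_zero := by decide

section ZeroCoordinate

variable {M N : Type*} [MulZeroClass M] [MulZeroClass N]

theorem Prod.fst_eq_zero_or_snd_eq_zero_mul_left (s : M × N) {x : M × N}
    (hx : x.1 = 0 ∨ x.2 = 0) : (s * x).1 = 0 ∨ (s * x).2 = 0 := by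
  rcases hx with h | h <;> simp [h]

theorem Prod.fst_eq_zero_or_snd_eq_zero_mul_right (s : M × N) {x : M × N}
    (hx : x.1 = 0 ∨ x.2 = 0) : (x * s).1 = 0 ∨ (x * s).2 = 0 := by
  rcases hx with h | h <;> simp [h]

end ZeroCoordinate

namespace Subsemigroup

variable {M : Type*} [Semigroup M] {G Z : Set M}

theorem mem_or_exists_mul_of_mem_closure {x : M} (hx : x ∈ closure G) :
    x ∈ G ∨ ∃ g ∈ G, ∃ y ∈ closure G, x = g * y := by
  induction hx using closure_induction with
  | mem x hx => exact .inl hx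
  | mul x y _ hy ihx _ =>
    right
    rcases ihx with hxG | ⟨g, hg, x', hx', rfl⟩
    · exact ⟨x, hxG, y, hy, rfl⟩
    · exact ⟨g, hg, x' * y, mul_mem hx' hy, mul_assoc _ _ _⟩

section CubeInRightIdeal

variable (hZ : ∀ z ∈ Z, ∀ m, z * m ∈ Z) (hG : ∀ g₁ ∈ G, ∀ g₂ ∈ G, ∀ g₃ ∈ G, g₁ * g₂ * g₃ ∈ Z)
include hZ hG

theorem mul_mul_mem_of_mem_of_mem_closure {g₁ g₂ y : M} (hg₁ : g₁ ∈ G) (hg₂ : g₂ ∈ G)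
    (hy : y ∈ closure G) : g₁ * g₂ * y ∈ Z := by
  rcases mem_or_exists_mul_of_mem_closure hy with hy | ⟨g₃, hg₃, y, -, rfl⟩
  · exact hG _ hg₁ _ hg₂ _ hy
  · rw [← mul_assoc]
    exact hZ _ (hG _ hg₁ _ hg₂ _ hg₃) _

theorem mem_or_exists_mul_or_mem_of_mem_closure {x : M} (hx : x ∈ closure G) :
    x ∈ G ∨ (∃ g₁ ∈ G, ∃ g₂ ∈ G, x = g₁ * g₂) ∨ x ∈ Z := by
  rcases mem_or_exists_mul_of_mem_closure hx with hx | ⟨g₁, hg₁, y, hy, rfl⟩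
  · exact .inl hx
  rcases mem_or_exists_mul_of_mem_closure hy with hy | ⟨g₂, hg₂, y', hy', rfl⟩
  · exact .inr (.inl ⟨g₁, hg₁, y, hy, rfl⟩)
  · rw [← mul_assoc]
    exact .inr (.inr (mul_mul_mem_of_mem_of_mem_closure hZ hG hg₁ hg₂ hy'))

theorem mul_mul_mem_of_mem_closure {x y w : M} (hx : x ∈ closure G) (hy : y ∈ closure G)
    (hw : w ∈ closure G) : x * y * w ∈ Z := by
  rcases mem_or_exists_mul_or_mem_of_mem_closure hZ hG hx with hx | ⟨g₁, hg₁, g₂, hg₂, rfl⟩ | hx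
  · rcases mem_or_exists_mul_of_mem_closure hy with hy | ⟨g, hg, y', hy', rfl⟩
    · exact mul_mul_mem_of_mem_of_mem_closure hZ hG hx hy hw
    · rw [← mul_assoc, mul_assoc]
      exact mul_mul_mem_of_mem_of_mem_closure hZ hG hx hg (mul_mem hy' hw)
  · rw [mul_assoc]
    exact mul_mul_mem_of_mem_of_mem_closure hZ hG hg₁ hg₂ (mul_mem hy hw)
  · exact hZ _ (hZ _ hx _) _

end CubeInRightIdeal

end Subsemigroup

namespace M5

abbrev gens : Set (M5 × M5) := {(a, f), (e, b)}

theorem gens_mul_mul_fst_eq_z_or_snd_eq_z :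
    ∀ g₁ ∈ gens, ∀ g₂ ∈ gens, ∀ g₃ ∈ gens, (g₁ * g₂ * g₃).1 = z ∨ (g₁ * g₂ * g₃).2 = z := by
  simp only [Set.mem_insert_iff, Set.mem_singleton_iff, forall_eq_or_imp, forall_eq]
  decide

theorem gens_mul_eq_a_b_of_ne_z :
    ∀ g₁ ∈ gens, ∀ g₂ ∈ gens, (g₁ * g₂).1 ≠ z → (g₁ * g₂).2 ≠ z → g₁ * g₂ = (a, b) := by
  simp only [Set.mem_insert_iff, Set.mem_singleton_iff, forall_eq_or_imp, forall_eq]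
  decide

end M5

/-- In `M²`, the subsemigroup `S` generated by `(a,f)` and `(e,b)` has the property that
its only elements with both coordinates nonzero are `(a,f)`, `(e,b)` and `(a,b)`; the
set `I` of elements of `S` having a zero coordinate is an ideal of `S`; and the Rees
quotient `S/I` is 3-nilpotent but not 2-nilpotent. -/
theorem stmt16 :
    let S := Subsemigroup.closure {((M5.a, M5.f) : M5 × M5), (M5.e, M5.b)}
    let I : Set (M5 × M5) := {x | x ∈ S ∧ (x.1 = M5.z ∨ x.2 = M5.z)}
    (∀ x ∈ S, x.1 ≠ M5.z → x.2 ≠ M5.z →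
      x = (M5.a, M5.f) ∨ x = (M5.e, M5.b) ∨ x = (M5.a, M5.b)) ∧
    (∀ s ∈ S, ∀ x ∈ I, s * x ∈ I ∧ x * s ∈ I) ∧
    (∀ x ∈ S, ∀ y ∈ S, ∀ w ∈ S, x * y * w ∈ I) ∧
    (∃ x ∈ S, ∃ y ∈ S, x * y ∉ I) := by
  intro S I
  let := M5.semigroupWithZero
  have hZ : ∀ x ∈ {x : M5 × M5 | x.1 = 0 ∨ x.2 = 0}, ∀ s,
      x * s ∈ {x : M5 × M5 | x.1 = 0 ∨ x.2 = 0} :=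
    fun x hx s => Prod.fst_eq_zero_or_snd_eq_zero_mul_right s hx
  have hG := M5.gens_mul_mul_fst_eq_z_or_snd_eq_z
  refine ⟨fun x hx h₁ h₂ => ?_, fun s hs x hx => ?_, fun x hx y hy w hw => ?_, ?_⟩
  · rcases Subsemigroup.mem_or_exists_mul_or_mem_of_mem_closure hZ hG hx with
      hx | ⟨g₁, hg₁, g₂, hg₂, rfl⟩ | hx
    · rcases hx with rfl | rfl <;> simp
    · exact .inr (.inr (M5.gens_mul_eq_a_b_of_ne_z g₁ hg₁ g₂ hg₂ h₁ h₂))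
    · exact (hx.elim h₁ h₂).elim
  · exact ⟨⟨S.mul_mem hs hx.1, Prod.fst_eq_zero_or_snd_eq_zero_mul_left s hx.2⟩,
      ⟨S.mul_mem hx.1 hs, Prod.fst_eq_zero_or_snd_eq_zero_mul_right s hx.2⟩⟩
  · exact ⟨S.mul_mem (S.mul_mem hx hy) hw,
      Subsemigroup.mul_mul_mem_of_mem_closure hZ hG hx hy hw⟩
  · exact ⟨(M5.e, M5.b), Subsemigroup.subset_closure (by simp), (M5.a, M5.f),
      Subsemigroup.subset_closure (by simp), fun h => absurd h.2 (by decide)⟩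
end

section
/- Let M be a finite semigroup of period p with a surjective homomorphism ν onto the 3-element left zero semigroup with adjoined identity L¹ = {1, a, b} (where 1 is an identity and xy = x for x,y ∈ {a,b}). Then M contains a 3-element subsemigroup isomorphic to L¹: namely, there exist idempotents 𝖾 ∈ ν⁻¹(1), 𝖺 ∈ ν⁻¹(a), 𝖻 ∈ ν⁻¹(b) with 𝖾𝖺 = 𝖺𝖾 = 𝖺, 𝖾𝖻 = 𝖻𝖾 = 𝖻, 𝖺𝖻 = 𝖺, 𝖻𝖺 = 𝖻. -/
inductive L1 : Type
  | one | a | b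
  deriving DecidableEq

instance : Fintype L1 where
  elems := {L1.one, L1.a, L1.b}
  complete := by intro x; cases x <;> decide

def L1.mul : L1 → L1 → L1
  | .one, x => x
  | x, .one => x
  | x, _ => x

instance : Semigroup L1 where
  mul := L1.mul
  mul_assoc := by decide

theorem L1.mul_self (z : L1) : z * z = z := by
  cases z <;> rfl

theorem Finite.exists_mul_self_eq_of_mul_mem {M : Type*} [Semigroup M] [Finite M] {s : Set M}
    (hs : s.Nonempty) (hmul : ∀ x ∈ s, ∀ y ∈ s, x * y ∈ s) : ∃ e ∈ s, e * e = e := by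
  let _ : TopologicalSpace M := ⊥
  have : DiscreteTopology M := ⟨rfl⟩
  exact exists_idempotent_in_compact_subsemigroup (fun _ ↦ continuous_of_discreteTopology) s hs
    s.toFinite.isCompact hmul

section Fibers

variable {M N : Type*} [Semigroup M] [Finite M] [Semigroup N] (ν : M →ₙ* N)

theorem exists_idempotent_map_eq {z : N} (hz : z * z = z) {x : M} (hx : ν x = z) :
    ∃ e, ν e = z ∧ e * e = e := by
  obtain ⟨e, he, hee⟩ := Finite.exists_mul_self_eq_of_mul_mem (s := ν ⁻¹' {z}) ⟨x, hx⟩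
    (fun x hx y hy ↦ by simp_all)
  exact ⟨e, he, hee⟩

theorem exists_idempotent_map_eq_absorbing {E C : M} (hE : E * E = E) (hC : C * C = C)
    {z : N} (hz : z * z = z) (hEz : ν E * z = z) (hzC : z * ν C = z) {x : M} (hx : ν x = z) :
    ∃ X, ν X = z ∧ X * X = X ∧ E * X = X ∧ X * C = X := by
  let s : Set M := {m | ν m = z ∧ E * m = m ∧ m * C = m}
  have hxs : E * x * C ∈ s :=
    ⟨by rw [map_mul, map_mul, hx, hEz, hzC], by rw [← mul_assoc, ← mul_assoc, hE],
      by rw [mul_assoc, hC]⟩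
  have hmul : ∀ m ∈ s, ∀ n ∈ s, m * n ∈ s := by
    rintro m ⟨hνm, hEm, -⟩ n ⟨hνn, -, hnC⟩
    exact ⟨by rw [map_mul, hνm, hνn, hz], by rw [← mul_assoc, hEm], by rw [mul_assoc, hnC]⟩
  obtain ⟨X, ⟨hνX, hEX, hXC⟩, hXX⟩ := Finite.exists_mul_self_eq_of_mul_mem ⟨_, hxs⟩ hmul
  exact ⟨X, hνX, hXX, hEX, hXC⟩

end Fibers

theorem stmt19_general {M : Type*} [Semigroup M] [Finite M]
    (ν : M →ₙ* L1) (hsurj : Function.Surjective ν) :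
    ∃ E A B : M, ν E = L1.one ∧ ν A = L1.a ∧ ν B = L1.b ∧
      E * E = E ∧ A * A = A ∧ B * B = B ∧
      E * A = A ∧ A * E = A ∧ E * B = B ∧ B * E = B ∧
      A * B = A ∧ B * A = B := by
  obtain ⟨E, hνE, hE⟩ := exists_idempotent_map_eq ν (L1.mul_self _) (hsurj L1.one).choose_spec
  obtain ⟨A₀, hνA₀, hA₀, hEA₀, hA₀E⟩ := exists_idempotent_map_eq_absorbing ν hE hE
    (L1.mul_self _) (by rw [hνE]; rfl) (by rw [hνE]; rfl) (hsurj L1.a).choose_spec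
  obtain ⟨B, hνB, hB, hEB, hBA₀⟩ := exists_idempotent_map_eq_absorbing ν hE hA₀
    (L1.mul_self _) (by rw [hνE]; rfl) (by rw [hνA₀]; rfl) (hsurj L1.b).choose_spec
  have hBE : B * E = B := by rw [← hBA₀, mul_assoc, hA₀E]
  refine ⟨E, A₀ * B, B, hνE, by rw [map_mul, hνA₀, hνB]; rfl, hνB, hE, ?_, hB,
    by rw [← mul_assoc, hEA₀], by rw [mul_assoc, hBE], hEB, hBE,
    by rw [mul_assoc, hB], by rw [← mul_assoc, hBA₀, hB]⟩
  rw [mul_assoc, ← mul_assoc B, hBA₀, hB]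

/-- Let `M` be a finite semigroup of period `p` with a surjective homomorphism `ν` onto
`L¹`.  Then `M` contains a 3-element subsemigroup isomorphic to `L¹`: there are
idempotents `𝖾 ∈ ν⁻¹(1)`, `𝖺 ∈ ν⁻¹(a)`, `𝖻 ∈ ν⁻¹(b)` with `𝖾𝖺 = 𝖺𝖾 = 𝖺`,
`𝖾𝖻 = 𝖻𝖾 = 𝖻`, `𝖺𝖻 = 𝖺`, `𝖻𝖺 = 𝖻`. -/
theorem stmt19 {M : Type*} [Semigroup M] [Finite M] (p : ℕ) (hp : 0 < p)
    (hper : ∃ i : ℕ, 0 < i ∧ (∀ x : M, pw x (i - 1) = pw x (i - 1 + p)) ∧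
      ∀ q : ℕ, 0 < q → (∀ x : M, pw x (i - 1) = pw x (i - 1 + q)) → p ≤ q)
    (ν : M →ₙ* L1) (hsurj : Function.Surjective ν) :
    ∃ E A B : M, ν E = L1.one ∧ ν A = L1.a ∧ ν B = L1.b ∧
      E * E = E ∧ A * A = A ∧ B * B = B ∧
      E * A = A ∧ A * E = A ∧ E * B = B ∧ B * E = B ∧
      A * B = A ∧ B * A = B :=
  stmt19_general ν hsurj
end
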